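/- arXiv:2009.14329 — 2 statements merged into one kernel-verified Lean document; each statement's English description precedes it below -/
import Mathlib

section
/- Let ω be a weight function on (0,1) with all moments ∫_0^1 t^n ω(t) dt finite, and B a weight function on (1,∞) with W_B = ∫_0^1 B(1/t²)/(t(1−t)²) dt < ∞. Then for all nonnegative integers j, k, s, m, n, r, the inner product in L^{2,B}(D̄^c) satisfies ⟨C_s^ω(e^s_{j,k}), C_s^ω(e^r_{m,n})⟩_B = π · ε_{k−j} · γ^ω_{k,s} · γ^ω_{n,r} · δ_{k−j, n−m} · ∫_0^1 u^{k−j−1} B(1/u) du, where ε_p = 1 if p ≥ 0 and ε_p = 0 if p < 0, and δ is the Kronecker delta. -/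
open MeasureTheory Complex

/-- The open unit disc in `ℂ`. -/
def unitDisc : Set ℂ := {z : ℂ | ‖z‖ < 1}

/-- The exterior of the closed unit disc in `ℂ`. -/
def outerDisc : Set ℂ := {z : ℂ | 1 < ‖z‖}

/-- The solid weighted Cauchy transform `C_s^ω f (z) = (1/π) ∫_D f(ξ) ω(|ξ|²)/(z-ξ) dA(ξ)`. -/
noncomputable def solidCauchy (ω : ℝ → ℝ) (f : ℂ → ℂ) (z : ℂ) : ℂ :=
  (Real.pi : ℂ)⁻¹ * ∫ ξ in unitDisc, f ξ * (ω (‖ξ‖ ^ 2) : ℂ) / (z - ξ)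

/-- The generic functions `e^ℓ_{j,k}(ξ) = ξ^j ξ̄^k (1 - |ξ|²)^ℓ`. -/
noncomputable def eFun (j k l : ℕ) (ξ : ℂ) : ℂ :=
  ξ ^ j * (starRingEnd ℂ) ξ ^ k * (((1 - ‖ξ‖ ^ 2) ^ l : ℝ) : ℂ)

/-- The moments `γ^ω_{k,s} = ∫_0^1 t^k (1-t)^s ω(t) dt`. -/
noncomputable def moment (ω : ℝ → ℝ) (k s : ℕ) : ℝ :=
  ∫ t in Set.Ioo (0 : ℝ) 1, t ^ k * (1 - t) ^ s * ω t

/-- The inner product of `L^{2,B}(D̄^c)`: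
`⟨f,g⟩_B = ∫_{|z|>1} f(z) conj(g(z)) B(|z|²) dA(z)`. -/
noncomputable def innerB (B : ℝ → ℝ) (f g : ℂ → ℂ) : ℂ :=
  ∫ z in outerDisc, f z * (starRingEnd ℂ) (g z) * (B (‖z‖ ^ 2) : ℂ)

/-!
For `|z| > 1` expand `1 / (z - ξ)` as `∑ ξ ^ p / z ^ (p + 1)`. In polar coordinates the
integral of `ξ ^ a * conj ξ ^ b * g (|ξ|²)` factors into a radial integral times
`∫ exp (i (a - b) θ) dθ`, which vanishes unless `a = b`; hence only the term `p = k - j`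
survives and `C_s^ω(e^s_{j,k})(z) = γ^ω_{k,s} z^(j-k-1)` (and `0` if `j > k`). The inner
product becomes `γ^ω_{k,s} γ^ω_{n,r} ∫_{|z|>1} z^(j-k-1) conj z^(m-n-1) B(|z|²) dA`, which by
the same orthogonality is `0` unless `k - j = n - m`, and otherwise `π ∫_1^∞ t^(j-k-1) B t dt`;
the substitution `t = 1 / u` turns this into the stated integral.
-/
open Set
open scoped Real ComplexConjugate

section Substitution

variable {E : Type*} [NormedAddCommGroup E] [NormedSpace ℝ E]

theorem integral_comp_sq_Ioi (f : ℝ → E) :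
    ∫ r in Ioi 0, (2 * r) • f (r ^ 2) = ∫ t in Ioi 0, f t := by
  have := integral_comp_rpow_Ioi_of_pos (g := f) two_pos
  norm_num [Real.rpow_two] at this
  exact this

theorem integrableOn_comp_sq_Ioi_iff (f : ℝ → E) :
    IntegrableOn (fun r => r • f (r ^ 2)) (Ioi 0) ↔ IntegrableOn f (Ioi 0) := by
  have := integrableOn_Ioi_comp_rpow_iff' f two_ne_zero
  norm_num [Real.rpow_two] at this
  exact this

theorem integral_Ioi_one_eq_integral_Ioo_inv (f : ℝ → E) :
    ∫ t in Ioi 1, f t = ∫ u in Ioo 0 1, (u ^ 2)⁻¹ • f u⁻¹ := by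
  have himage : (·⁻¹) '' Ioo (0 : ℝ) 1 = Ioi 1 := by
    rw [image_inv_eq_inv, inv_Ioo_0_left one_pos, inv_one]
  rw [← himage, integral_image_eq_integral_abs_deriv_smul measurableSet_Ioo
    (fun u hu => (hasDerivAt_inv hu.1.ne').hasDerivWithinAt) inv_injective.injOn]
  refine setIntegral_congr_fun measurableSet_Ioo fun u _ => ?_
  rw [abs_neg, abs_of_nonneg (by positivity)]

end Substitution

theorem integral_Ioi_one_zpow_mul (a : ℤ) (g : ℝ → ℝ) :
    ∫ t in Ioi 1, t ^ a * g t = ∫ u in Ioo 0 1, u ^ (-a - 2) * g (1 / u) := by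
  rw [integral_Ioi_one_eq_integral_Ioo_inv]
  refine setIntegral_congr_fun measurableSet_Ioo fun u hu => ?_
  have hu0 : u ≠ 0 := hu.1.ne'
  rw [smul_eq_mul, one_div, inv_zpow', ← mul_assoc, ← zpow_natCast, ← zpow_neg, ← zpow_add₀ hu0]
  congr 2
  push_cast
  ring

theorem integral_exp_int_mul_I (a : ℤ) :
    ∫ θ in Ioo (-π) π, cexp (a * θ * I) = if a = 0 then (2 * π : ℂ) else 0 := by
  rw [← integral_Ioc_eq_integral_Ioo, ← intervalIntegral.integral_of_le (by linarith [Real.pi_pos])]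
  split_ifs with ha
  · simp [ha]
    ring
  · have hc : (a : ℂ) * I ≠ 0 := mul_ne_zero (Int.cast_ne_zero.2 ha) I_ne_zero
    have hperiodic : cexp (a * I * π) = cexp (a * I * (-π)) := by
      rw [show (a : ℂ) * I * π = a * I * (-π) + a * (2 * π * I) by ring, exp_add,
        exp_int_mul_two_pi_mul_I, mul_one]
    simp_rw [mul_right_comm (a : ℂ) _ I]
    rw [integral_exp_mul_complex hc, hperiodic, ofReal_neg, sub_self, zero_div]

theorem polarCoord_symm_zpow_mul_conj_zpow (a b : ℤ) {r : ℝ} (hr : 0 < r) (θ : ℝ) :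
    Complex.polarCoord.symm (r, θ) ^ a * conj (Complex.polarCoord.symm (r, θ)) ^ b =
      (r : ℂ) ^ (a + b) * cexp ((a - b) * θ * I) := by
  have hr' : (r : ℂ) ≠ 0 := ofReal_ne_zero.2 hr.ne'
  have hpolar : Complex.polarCoord.symm (r, θ) = r * cexp (θ * I) := by
    rw [Complex.polarCoord_symm_apply, exp_mul_I, ofReal_cos, ofReal_sin]
  have hconj : conj (Complex.polarCoord.symm (r, θ)) = r * cexp (-(θ * I)) := by
    rw [hpolar, map_mul, conj_ofReal, ← exp_conj, map_mul, conj_ofReal, conj_I, mul_neg]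
  rw [hconj, hpolar, mul_zpow, mul_zpow, ← exp_int_mul, ← exp_int_mul, zpow_add₀ hr']
  rw [show ((a : ℂ) - b) * θ * I = a * (θ * I) + b * -(θ * I) by ring, exp_add]
  ring

theorem integral_zpow_mul_conj_zpow_mul_radial (a b : ℤ) (g : ℝ → ℂ) :
    ∫ z : ℂ, z ^ a * conj z ^ b * g (‖z‖ ^ 2) =
      if a = b then π * ∫ t in Ioi (0 : ℝ), (t : ℂ) ^ a * g t else 0 := by
  rw [← Complex.integral_comp_polarCoord_symm, polarCoord_target]
  have hpolar : ∀ p ∈ Ioi (0 : ℝ) ×ˢ Ioo (-π) π,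
      p.1 • (Complex.polarCoord.symm p ^ a * conj (Complex.polarCoord.symm p) ^ b *
        g (‖Complex.polarCoord.symm p‖ ^ 2)) =
      ((p.1 : ℂ) ^ (a + b) * p.1 * g (p.1 ^ 2)) * cexp (((a - b : ℤ) : ℂ) * p.2 * I) := by
    rintro ⟨r, θ⟩ ⟨hr, -⟩
    rw [Complex.norm_polarCoord_symm, abs_of_pos hr, polarCoord_symm_zpow_mul_conj_zpow a b hr,
      real_smul, Int.cast_sub]
    ring
  rw [setIntegral_congr_fun (measurableSet_Ioi.prod measurableSet_Ioo) hpolar,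
    Measure.volume_eq_prod, setIntegral_prod_mul (fun r : ℝ => (r : ℂ) ^ (a + b) * r * g (r ^ 2))
      (fun θ : ℝ => cexp (((a - b : ℤ) : ℂ) * θ * I)), integral_exp_int_mul_I]
  simp only [sub_eq_zero]
  split_ifs with hab
  · subst hab
    rw [← integral_comp_sq_Ioi (fun t : ℝ => (t : ℂ) ^ a * g t)]
    have hsq : ∀ r ∈ Ioi (0 : ℝ), (r : ℂ) ^ (a + a) * r * g (r ^ 2) =
        (1 / 2 : ℂ) * (2 * r) • ((((r ^ 2 : ℝ)) : ℂ) ^ a * g (r ^ 2)) := by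
      intro r hr
      rw [real_smul, ofReal_pow, sq (r : ℂ), mul_zpow, zpow_add₀ (ofReal_ne_zero.2 (ne_of_gt hr))]
      push_cast
      ring
    rw [setIntegral_congr_fun measurableSet_Ioi hsq, integral_const_mul]
    ring
  · rw [mul_zero]

theorem setIntegral_zpow_mul_conj_zpow_mul_radial (a b : ℤ) (g : ℝ → ℂ) {S : Set ℝ}
    (hS : MeasurableSet S) :
    ∫ z in {z : ℂ | ‖z‖ ^ 2 ∈ S}, z ^ a * conj z ^ b * g (‖z‖ ^ 2) =
      if a = b then π * ∫ t in Ioi 0 ∩ S, (t : ℂ) ^ a * g t else 0 := by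
  have hmeas : MeasurableSet {z : ℂ | ‖z‖ ^ 2 ∈ S} := (by fun_prop : Measurable _) hS
  rw [← integral_indicator hmeas]
  have hind : ∀ z : ℂ, {z : ℂ | ‖z‖ ^ 2 ∈ S}.indicator (fun z => z ^ a * conj z ^ b * g (‖z‖ ^ 2)) z
      = z ^ a * conj z ^ b * S.indicator g (‖z‖ ^ 2) := by
    intro z
    by_cases hz : ‖z‖ ^ 2 ∈ S <;> simp [hz]
  simp only [hind, integral_zpow_mul_conj_zpow_mul_radial]
  congr 2
  rw [← setIntegral_indicator hS]
  congr 1 with t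
  by_cases ht : t ∈ S <;> simp [ht]

theorem measurableSet_unitDisc : MeasurableSet unitDisc :=
  measurableSet_lt measurable_norm measurable_const

theorem measurableSet_outerDisc : MeasurableSet outerDisc :=
  measurableSet_lt measurable_const measurable_norm

theorem unitDisc_eq_setOf_norm_sq : unitDisc = {z : ℂ | ‖z‖ ^ 2 ∈ Iio 1} := by
  ext z
  simp [unitDisc]

theorem outerDisc_eq_setOf_norm_sq : outerDisc = {z : ℂ | ‖z‖ ^ 2 ∈ Ioi 1} := by
  ext z
  simp [outerDisc]

theorem setIntegral_unitDisc_eFun_mul_pow (ω : ℝ → ℝ) (j k s p : ℕ) :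
    ∫ ξ in unitDisc, eFun j k s ξ * ω (‖ξ‖ ^ 2) * ξ ^ p =
      if j + p = k then (π : ℂ) * moment ω k s else 0 := by
  have hform : ∀ ξ : ℂ, eFun j k s ξ * ω (‖ξ‖ ^ 2) * ξ ^ p =
      ξ ^ ((j + p : ℕ) : ℤ) * conj ξ ^ (k : ℤ) * (((1 - ‖ξ‖ ^ 2) ^ s * ω (‖ξ‖ ^ 2) : ℝ) : ℂ) := by
    intro ξ
    simp only [eFun, zpow_natCast, ofReal_mul, pow_add]
    ring
  simp only [hform, unitDisc_eq_setOf_norm_sq]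
  rw [setIntegral_zpow_mul_conj_zpow_mul_radial _ _ (fun t => (((1 - t) ^ s * ω t : ℝ) : ℂ))
    measurableSet_Iio, Ioi_inter_Iio]
  simp only [Nat.cast_inj]
  split_ifs with hk
  · rw [moment, ← integral_complex_ofReal, ← hk]
    congr 2 with t
    rw [zpow_natCast]
    push_cast
    ring
  · rfl

theorem integrableOn_unitDisc_comp_norm_sq {E : Type*} [NormedAddCommGroup E] [NormedSpace ℝ E]
    {g : ℝ → E} (hg : IntegrableOn g (Ioo 0 1)) :
    IntegrableOn (fun ξ : ℂ => g (‖ξ‖ ^ 2)) unitDisc := by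
  have hball : unitDisc = Metric.ball (0 : ℂ) 1 := by
    ext z
    simp [unitDisc]
  rw [hball, integrableOn_fun_norm_addHaar volume (f := fun y => g (y ^ 2)), finrank_real_complex]
  have hsq : IntegrableOn (fun r => r • (Ioo 0 1).indicator g (r ^ 2)) (Ioi 0) :=
    (integrableOn_comp_sq_Ioi_iff _).2
      ((integrable_indicator_iff measurableSet_Ioo).2 hg).integrableOn
  refine (hsq.mono_set Ioo_subset_Ioi_self).congr_fun (fun r hr => ?_) measurableSet_Ioo
  have hr2 : r ^ 2 ∈ Ioo (0 : ℝ) 1 := ⟨by positivity [hr.1], by nlinarith [hr.1, hr.2]⟩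
  simp [indicator_of_mem hr2]

theorem integrableOn_unitDisc_eFun_mul {ω : ℝ → ℝ} (hω : IntegrableOn ω (Ioo 0 1))
    (j k s : ℕ) : IntegrableOn (fun ξ => eFun j k s ξ * ω (‖ξ‖ ^ 2)) unitDisc := by
  refine (integrableOn_unitDisc_comp_norm_sq (g := fun t => (ω t : ℂ)) hω.ofReal).bdd_mul (c := 1)
    (by unfold eFun; fun_prop) ?_
  filter_upwards [ae_restrict_mem measurableSet_unitDisc] with ξ (hξ : ‖ξ‖ < 1)
  have h1 : 0 ≤ 1 - ‖ξ‖ ^ 2 := by nlinarith [norm_nonneg ξ]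
  have h2 : 1 - ‖ξ‖ ^ 2 ≤ 1 := by nlinarith [norm_nonneg ξ]
  simp only [eFun, norm_mul, norm_pow, RCLike.norm_conj, norm_real, Real.norm_eq_abs,
    abs_of_nonneg h1]
  calc ‖ξ‖ ^ j * ‖ξ‖ ^ k * (1 - ‖ξ‖ ^ 2) ^ s ≤ 1 * 1 * 1 := by
        gcongr <;> first | exact pow_le_one₀ (norm_nonneg ξ) hξ.le | exact pow_le_one₀ h1 h2
    _ = 1 := by norm_num

theorem hasSum_pow_div_pow_succ {ξ z : ℂ} (h : ‖ξ‖ < ‖z‖) :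
    HasSum (fun p : ℕ => ξ ^ p / z ^ (p + 1)) (z - ξ)⁻¹ := by
  have hz : z ≠ 0 := norm_pos_iff.1 ((norm_nonneg ξ).trans_lt h)
  have hq : ‖ξ / z‖ < 1 := by
    rwa [norm_div, div_lt_one (norm_pos_iff.2 hz)]
  have hterm : (fun p : ℕ => ξ ^ p / z ^ (p + 1)) = fun p => z⁻¹ * (ξ / z) ^ p := by
    ext p
    rw [div_pow, pow_succ]
    field_simp
  have hlimit : (z - ξ)⁻¹ = z⁻¹ * (1 - ξ / z)⁻¹ := by
    rw [← mul_inv, mul_sub, mul_one, mul_div_cancel₀ _ hz]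
  rw [hterm, hlimit]
  exact (hasSum_geometric_of_norm_lt_one hq).mul_left z⁻¹

theorem hasSum_integral_div_sub {μ : Measure ℂ} {f : ℂ → ℂ} (hf : Integrable f μ) {R : ℝ}
    (hμ : ∀ᵐ ξ ∂μ, ‖ξ‖ ≤ R) {z : ℂ} (hz : R < ‖z‖) :
    HasSum (fun p : ℕ => (∫ ξ, f ξ * ξ ^ p ∂μ) / z ^ (p + 1)) (∫ ξ, f ξ / (z - ξ) ∂μ) := by
  rcases eq_or_ne μ 0 with rfl | hμ0
  · simp [hasSum_zero]
  have hR : 0 ≤ R := by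
    have := ae_neBot.2 hμ0
    obtain ⟨ξ, hξ⟩ := hμ.exists
    exact (norm_nonneg ξ).trans hξ
  have hz0 : 0 < ‖z‖ := hR.trans_lt hz
  set F : ℕ → ℂ → ℂ := fun p ξ => f ξ * (ξ ^ p / z ^ (p + 1))
  have hF_bound : ∀ p, ∀ᵐ ξ ∂μ, ‖ξ ^ p / z ^ (p + 1)‖ ≤ (R / ‖z‖) ^ p / ‖z‖ := by
    intro p
    filter_upwards [hμ] with ξ hξ
    rw [norm_div, norm_pow, norm_pow, div_pow, pow_succ, ← div_div]
    gcongr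
  have hF_int : ∀ p, Integrable (F p) μ := fun p => hf.mul_bdd (by fun_prop) (hF_bound p)
  have hF_sum : Summable fun p => ∫ ξ, ‖F p ξ‖ ∂μ := by
    refine Summable.of_nonneg_of_le (fun p => integral_nonneg fun ξ => norm_nonneg _)
      (fun p => ?_) (((summable_geometric_of_lt_one (by positivity)
        ((div_lt_one hz0).2 hz)).div_const ‖z‖).mul_right (∫ ξ, ‖f ξ‖ ∂μ))
    rw [← integral_const_mul]
    refine integral_mono_ae (hF_int p).norm (hf.norm.const_mul _) ?_
    filter_upwards [hF_bound p] with ξ hξ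
    rw [norm_mul, mul_comm]
    gcongr
  have hterm : ∀ p, ∫ ξ, F p ξ ∂μ = (∫ ξ, f ξ * ξ ^ p ∂μ) / z ^ (p + 1) := fun p => by
    simp only [F, ← mul_div_assoc, integral_div]
  have hlimit : ∫ ξ, ∑' p, F p ξ ∂μ = ∫ ξ, f ξ / (z - ξ) ∂μ := by
    refine integral_congr_ae ?_
    filter_upwards [hμ] with ξ hξ
    rw [div_eq_mul_inv]
    exact ((hasSum_pow_div_pow_succ (hξ.trans_lt hz)).mul_left (f ξ)).tsum_eq
  simpa only [hterm, hlimit] using hasSum_integral_of_summable_integral_norm hF_int hF_sum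

theorem solidCauchy_eFun_of_one_lt_norm {ω : ℝ → ℝ} (hω : IntegrableOn ω (Ioo 0 1))
    (j k s : ℕ) {z : ℂ} (hz : 1 < ‖z‖) :
    solidCauchy ω (eFun j k s) z =
      (if j ≤ k then (moment ω k s : ℂ) else 0) * z ^ ((j : ℤ) - k - 1) := by
  have hexpand := hasSum_integral_div_sub (integrableOn_unitDisc_eFun_mul hω j k s)
    ((ae_restrict_mem measurableSet_unitDisc).mono fun ξ (hξ : ‖ξ‖ < 1) => hξ.le) hz
  simp only [setIntegral_unitDisc_eFun_mul_pow] at hexpand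
  have hsingle := hasSum_single (f := fun p : ℕ =>
    (if j + p = k then (π : ℂ) * moment ω k s else 0) / z ^ (p + 1)) (k - j)
    fun p hp => by rw [if_neg (by omega), zero_div]
  rw [solidCauchy, hexpand.unique hsingle]
  split_ifs
  · rw [show (j : ℤ) - k - 1 = -((k - j + 1 : ℕ) : ℤ) by omega, zpow_neg, zpow_natCast]
    field_simp [ofReal_ne_zero.2 Real.pi_ne_zero]
  · omega
  · omega
  · simp

theorem innerB_solidCauchy_eFun_general
    (ω : ℝ → ℝ)
    (hω_mom : ∀ n : ℕ, IntegrableOn (fun t => t ^ n * ω t) (Set.Ioo (0 : ℝ) 1))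
    (B : ℝ → ℝ)
    (j k s m n r : ℕ) :
    innerB B (solidCauchy ω (eFun j k s)) (solidCauchy ω (eFun m n r)) =
      (Real.pi : ℂ) * (if j ≤ k then 1 else 0) * (moment ω k s : ℂ) * (moment ω n r : ℂ) *
        (if (k : ℤ) - (j : ℤ) = (n : ℤ) - (m : ℤ) then 1 else 0) *
        ((∫ u in Set.Ioo (0 : ℝ) 1, u ^ ((k : ℤ) - (j : ℤ) - 1) * B (1 / u) : ℝ) : ℂ) := by
  have hω : IntegrableOn ω (Ioo 0 1) := by simpa using hω_mom 0
  have hintegrand : ∀ z ∈ outerDisc,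
      solidCauchy ω (eFun j k s) z * conj (solidCauchy ω (eFun m n r) z) * (B (‖z‖ ^ 2) : ℂ) =
        ((if j ≤ k then (moment ω k s : ℂ) else 0) * (if m ≤ n then (moment ω n r : ℂ) else 0)) *
          (z ^ ((j : ℤ) - k - 1) * conj z ^ ((m : ℤ) - n - 1) * (B (‖z‖ ^ 2) : ℂ)) := by
    intro z (hz : 1 < ‖z‖)
    rw [solidCauchy_eFun_of_one_lt_norm hω _ _ _ hz, solidCauchy_eFun_of_one_lt_norm hω _ _ _ hz]
    simp only [map_mul, map_zpow₀, apply_ite conj, conj_ofReal, map_zero]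
    ring
  have hradial : ∫ t in Ioi (0 : ℝ) ∩ Ioi 1, (t : ℂ) ^ ((j : ℤ) - k - 1) * (B t : ℂ) =
      ((∫ u in Ioo (0 : ℝ) 1, u ^ ((k : ℤ) - j - 1) * B (1 / u) : ℝ) : ℂ) := by
    rw [Ioi_inter_Ioi, sup_of_le_right zero_le_one,
      show (k : ℤ) - j - 1 = -((j : ℤ) - k - 1) - 2 by ring, ← integral_Ioi_one_zpow_mul,
      ← integral_complex_ofReal]
    push_cast
    rfl
  rw [innerB, setIntegral_congr_fun measurableSet_outerDisc hintegrand, integral_const_mul,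
    outerDisc_eq_setOf_norm_sq,
    setIntegral_zpow_mul_conj_zpow_mul_radial _ _ (fun t => (B t : ℂ)) measurableSet_Ioi, hradial]
  split_ifs <;> first | omega | ring

theorem innerB_solidCauchy_eFun
    (ω : ℝ → ℝ) (hω_meas : Measurable ω)
    (hω_nonneg : ∀ t ∈ Set.Ioo (0 : ℝ) 1, 0 ≤ ω t)
    (hω_mom : ∀ n : ℕ, IntegrableOn (fun t => t ^ n * ω t) (Set.Ioo (0 : ℝ) 1))
    (B : ℝ → ℝ) (hB_meas : Measurable B)
    (hB_nonneg : ∀ t ∈ Set.Ioi (1 : ℝ), 0 ≤ B t)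
    (hW : IntegrableOn (fun t => B (1 / t ^ 2) / (t * (1 - t) ^ 2)) (Set.Ioo (0 : ℝ) 1))
    (j k s m n r : ℕ) :
    innerB B (solidCauchy ω (eFun j k s)) (solidCauchy ω (eFun m n r)) =
      (Real.pi : ℂ) * (if j ≤ k then 1 else 0) * (moment ω k s : ℂ) * (moment ω n r : ℂ) *
        (if (k : ℤ) - (j : ℤ) = (n : ℤ) - (m : ℤ) then 1 else 0) *
        ((∫ u in Set.Ioo (0 : ℝ) 1, u ^ ((k : ℤ) - (j : ℤ) - 1) * B (1 / u) : ℝ) : ℂ) :=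
  innerB_solidCauchy_eFun_general ω hω_mom B j k s m n r
end

section
/- Let ω be a weight function on (0,1) with all moments ∫_0^1 t^n ω(t) dt finite, and B a weight function on (1,∞) with W_B = ∫_0^1 B(1/t²)/(t(1−t)²) dt < ∞. Fix a nonnegative integer k. Then the family (C_s^ω(e^s_{j,k}))_{j,s}, indexed by nonnegative integers j and s, is orthogonal in L^{2,B}(D̄^c): if j ≠ m then ⟨C_s^ω(e^s_{j,k}), C_s^ω(e^r_{m,k})⟩_B = 0 for all nonnegative integers s, r. -/
open MeasureTheory Complex

/-!
A rotation `ξ ↦ a ξ` with `|a| = 1` preserves area measure, the disc and its exterior. Hence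
`C_s^ω(e^s_{j,k})(a z) = a^{j-k-1} C_s^ω(e^s_{j,k})(z)`, and substituting `z ↦ a z` in
`⟨C_s^ω(e^s_{j,k}), C_s^ω(e^r_{m,k})⟩_B` multiplies it by `a^{j-k-1} conj(a)^{m-k-1} = a^{j-m}`.
For `j ≠ m` some `a` has `a^{j-m} ≠ 1`, so the inner product vanishes.
-/

lemma setIntegral_radial_comp_circle_mul {E : Type*} [NormedAddCommGroup E] [NormedSpace ℝ E]
    (a : Circle) (P : ℝ → Prop) (f : ℂ → E) :
    ∫ z in {z : ℂ | P ‖z‖}, f (a * z) = ∫ z in {z : ℂ | P ‖z‖}, f z := by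
  have hpre : rotation a ⁻¹' {z : ℂ | P ‖z‖} = {z | P ‖z‖} := by
    ext z; simp [Circle.norm_coe]
  simpa only [hpre, rotation_apply] using
    (rotation a).measurePreserving.setIntegral_preimage_emb
      (rotation a).toHomeomorph.measurableEmbedding f {z | P ‖z‖}

lemma Circle.exists_pow_ne_pow {j m : ℕ} (h : j ≠ m) : ∃ a : Circle, a ^ j ≠ a ^ m := by
  have hjm : ((j - m : ℤ) : ℝ) ≠ 0 :=
    Int.cast_ne_zero.mpr (sub_ne_zero.mpr (by exact_mod_cast h))
  refine ⟨Circle.exp (Real.pi / (j - m : ℤ)), fun heq => Circle.exp_pi_ne_one ?_⟩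
  rw [← mul_div_cancel₀ Real.pi hjm, Circle.exp_intCast_mul, zpow_sub, zpow_natCast,
    zpow_natCast, heq, mul_inv_cancel]

lemma eFun_circle_mul (a : Circle) (j k l : ℕ) (ξ : ℂ) :
    eFun j k l (a * ξ) = ↑(a ^ j * (a ^ k)⁻¹) * eFun j k l ξ := by
  simp only [eFun, norm_mul, Circle.norm_coe, one_mul, map_mul, ← Circle.coe_inv_eq_conj]
  push_cast
  ring

lemma solidCauchy_circle_mul {ω : ℝ → ℝ} {f : ℂ → ℂ} {a b : Circle}
    (hf : ∀ ξ, f (a * ξ) = b * f ξ) (z : ℂ) :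
    solidCauchy ω f (a * z) = ↑(b * a⁻¹) * solidCauchy ω f z := by
  have hrot : ∀ ξ : ℂ, f (a * ξ) * (ω (‖(a : ℂ) * ξ‖ ^ 2) : ℂ) / (a * z - a * ξ)
      = ↑(b * a⁻¹) * (f ξ * (ω (‖ξ‖ ^ 2) : ℂ) / (z - ξ)) := by
    intro ξ
    rw [hf, norm_mul, Circle.norm_coe, one_mul, ← mul_sub, Circle.coe_mul, Circle.coe_inv]
    field_simp
  rw [solidCauchy, solidCauchy, unitDisc,
    ← setIntegral_radial_comp_circle_mul a (· < 1), funext hrot, integral_const_mul]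
  ring

lemma innerB_eq_zero_of_circle_mul {B : ℝ → ℝ} {F G : ℂ → ℂ} {a b c : Circle}
    (hF : ∀ z, F (a * z) = b * F z) (hG : ∀ z, G (a * z) = c * G z) (hbc : b ≠ c) :
    innerB B F G = 0 := by
  have hrot : ∀ z : ℂ, F (a * z) * starRingEnd ℂ (G (a * z)) * (B (‖(a : ℂ) * z‖ ^ 2) : ℂ)
      = ↑(b / c) * (F z * starRingEnd ℂ (G z) * (B (‖z‖ ^ 2) : ℂ)) := by
    intro z
    rw [hF, hG, norm_mul, Circle.norm_coe, one_mul, map_mul, ← Circle.coe_inv_eq_conj,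
      div_eq_mul_inv, Circle.coe_mul]
    ring
  have hfix : innerB B F G = ↑(b / c) * innerB B F G := by
    conv_lhs => rw [innerB, outerDisc, ← setIntegral_radial_comp_circle_mul a (1 < ·),
      funext hrot, integral_const_mul]
    rfl
  have hbc' : ((b / c : Circle) : ℂ) ≠ 1 := by
    simpa [← Circle.coe_inj] using div_ne_one_of_ne hbc
  exact (mul_left_eq_self₀.mp hfix.symm).resolve_left hbc'

theorem solidCauchy_eFun_orthogonal_general
    (ω : ℝ → ℝ)
    (B : ℝ → ℝ)
    (k : ℕ) (j m s r : ℕ) (hjm : j ≠ m) :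
    innerB B (solidCauchy ω (eFun j k s)) (solidCauchy ω (eFun m k r)) = 0 := by
  obtain ⟨a, ha⟩ := Circle.exists_pow_ne_pow hjm
  refine innerB_eq_zero_of_circle_mul
    (solidCauchy_circle_mul (eFun_circle_mul a j k s))
    (solidCauchy_circle_mul (eFun_circle_mul a m k r)) ?_
  simpa using ha

theorem solidCauchy_eFun_orthogonal
    (ω : ℝ → ℝ) (hω_meas : Measurable ω)
    (hω_nonneg : ∀ t ∈ Set.Ioo (0 : ℝ) 1, 0 ≤ ω t)
    (hω_mom : ∀ n : ℕ, IntegrableOn (fun t => t ^ n * ω t) (Set.Ioo (0 : ℝ) 1))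
    (B : ℝ → ℝ) (hB_meas : Measurable B)
    (hB_nonneg : ∀ t ∈ Set.Ioi (1 : ℝ), 0 ≤ B t)
    (hW : IntegrableOn (fun t => B (1 / t ^ 2) / (t * (1 - t) ^ 2)) (Set.Ioo (0 : ℝ) 1))
    (k : ℕ) (j m s r : ℕ) (hjm : j ≠ m) :
    innerB B (solidCauchy ω (eFun j k s)) (solidCauchy ω (eFun m k r)) = 0 :=
  solidCauchy_eFun_orthogonal_general ω B k j m s r hjm
end
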